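/- arXiv:1904.11099 — 2 statements merged into one kernel-verified Lean document; each statement's English description precedes it below -/
import Mathlib

section
/- The renormalization operation on a coherent weight function of a rooted tree preserves coherence: if h is coherent and there exists a sibling-subtree with positive weight outside the refuted vertex, then the renormalized weight function (which zeroes the refuted subtree and rescales the surviving subtrees under the deepest ancestor with surviving support) is again coherent. -/
/-- An abstract rooted tree: every vertex has a parent (the root is its own
parent), a depth (distance to the root), every vertex is connected to the
root, and each depth level is finite (finitely-branching). -/
structure RTree (V : Type) where
  root : V
  parent : V → V
  depth : V → ℕ
  parent_root : parent root = root
  depth_root : depth root = 0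
  depth_parent : ∀ v : V, v ≠ root → depth (parent v) + 1 = depth v
  ancestor_root : ∀ v : V, parent^[depth v] v = root
  level_finite : ∀ d : ℕ, {v : V | depth v = d}.Finite

namespace RTree

variable {V : Type}

/-- The children of a vertex. -/
def children (T : RTree V) (v : V) : Set V :=
  {u : V | T.parent u = v ∧ u ≠ T.root}

/-- The descendants of `v` that lie `e` levels below `v`. -/
def descAt (T : RTree V) (e : ℕ) (v : V) : Set V :=
  {u : V | T.parent^[e] u = v ∧ T.depth u = T.depth v + e}

end RTree

/-- A coherent weight function (a Hintikka tree): the root gets weight 1 and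
the weight of each vertex is the sum of the weights of its children. -/
def Coherent {V : Type} (T : RTree V) (h : V → ℝ) : Prop :=
  h T.root = 1 ∧ ∀ v : V, h v = ∑ᶠ u ∈ T.children v, h u
open scoped Classical

/-- `u` is an ancestor of (or equal to) `v`. -/
def AncOrEq {V : Type} (T : RTree V) (u v : V) : Prop :=
  ∃ k : ℕ, T.parent^[k] v = u ∧ T.depth v = T.depth u + k

/-- `u` is a proper descendant of `ρ`. -/
def ProperDesc {V : Type} (T : RTree V) (ρ u : V) : Prop :=
  ∃ j : ℕ, 0 < j ∧ T.parent^[j] u = ρ ∧ T.depth u = T.depth ρ + j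

/-- `u` is supported (relative to weights `h`, target depth `D`, and the
refuted depth-`D` vertex `w`): there is a chain from `u` down to some
depth-`D` vertex `v ≠ w` along which `h` is positive (for vertices deeper
than `D`, we require the ancestor at depth `D` to avoid `w` and to carry
positive weight). -/
def Supported {V : Type} (T : RTree V) (h : V → ℝ) (D : ℕ) (w : V) (u : V) : Prop :=
  if T.depth u ≤ D then
    ∃ v : V, T.depth v = D ∧ v ≠ w ∧ T.parent^[D - T.depth u] v = u ∧
      ∀ k : ℕ, k ≤ D - T.depth u → 0 < h (T.parent^[k] v)
  else
    T.parent^[T.depth u - D] u ≠ w ∧ 0 < h (T.parent^[T.depth u - D] u)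

/-- The total renormalization constant: sum of `h` over the children of `ρ`. -/
noncomputable def Ztot {V : Type} (T : RTree V) (h : V → ℝ) (ρ : V) : ℝ :=
  ∑ᶠ u ∈ T.children ρ, h u

/-- The positive renormalization constant: sum of `h` over the supported
children of `ρ`. -/
noncomputable def Zplus {V : Type} (T : RTree V) (h : V → ℝ) (D : ℕ) (w ρ : V) : ℝ :=
  ∑ᶠ u ∈ T.children ρ ∩ {u : V | Supported T h D w u}, h u

/-- Renormalization of `h` refuting the depth-`D` vertex `w`, with
redistribution point `ρ`: zero the unsupported descendants of `ρ`, rescale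
the supported descendants of `ρ` by `Z/Z⁺`, and leave everything else
unchanged. -/
noncomputable def renorm {V : Type} (T : RTree V) (h : V → ℝ) (D : ℕ) (w ρ : V) : V → ℝ :=
  fun u =>
    if ProperDesc T ρ u then
      if Supported T h D w u then (Ztot T h ρ / Zplus T h D w ρ) * h u else 0
    else h u

/-- `ρ` is the redistribution point for refuting the depth-`D` vertex `w`:
it is the deepest ancestor of `w` having a supported child. -/
def IsRedistPoint {V : Type} (T : RTree V) (h : V → ℝ) (D : ℕ) (w ρ : V) : Prop :=
  AncOrEq T ρ w ∧ (∃ c ∈ T.children ρ, Supported T h D w c) ∧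
    ∀ u : V, AncOrEq T u w → T.depth ρ < T.depth u →
      ∀ c ∈ T.children u, ¬ Supported T h D w c

/-!
Off the subtree of the redistribution point `ρ` nothing changes, and at `ρ` itself the
supported children, rescaled by `Z/Z⁺`, carry exactly the old total `Z = h ρ`. Below `ρ` the
renormalized weights are, on each vertex together with its children, a constant multiple of `h`
(by `Z/Z⁺` or by `0`), since supportedness is inherited by parents and, below `ρ`, also by every
child of positive weight: a positive child `c` failing to be supported has all its positive
chains to depth `D` ending in `w`, so its parent would be an ancestor of `w` strictly below `ρ`
with a supported child, against the maximality of `ρ`.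
-/

namespace RTree

variable {V : Type} (T : RTree V)

lemma depth_iterate_parent (k : ℕ) (u : V) : T.depth (T.parent^[k] u) = T.depth u - k := by
  induction k generalizing u with
  | zero => rfl
  | succ k ih =>
    rw [Function.iterate_succ_apply, ih]
    by_cases hu : u = T.root
    · rw [hu, T.parent_root, T.depth_root]
      omega
    · have := T.depth_parent u hu
      omega

variable {T}

lemma depth_of_mem_children {c v : V} (hc : c ∈ T.children v) : T.depth c = T.depth v + 1 := by
  rw [← T.depth_parent c hc.2, hc.1]

lemma mem_children_of_parent_eq {c v : V} (hp : T.parent c = v)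
    (hd : T.depth c = T.depth v + 1) : c ∈ T.children v := by
  refine ⟨hp, fun hc => ?_⟩
  rw [hc, T.depth_root] at hd
  omega

lemma iterate_parent_succ_of_mem_children {c v : V} (hc : c ∈ T.children v) (k : ℕ) :
    T.parent^[k + 1] c = T.parent^[k] v := by
  rw [Function.iterate_succ_apply, hc.1]

variable (T)

lemma children_finite (v : V) : (T.children v).Finite :=
  (T.level_finite (T.depth v + 1)).subset fun _ hc => depth_of_mem_children hc

end RTree

open RTree

section

variable {V : Type} {T : RTree V} {h : V → ℝ}

namespace Coherent

lemma exists_pos_of_mem_children (hcoh : Coherent T h) {v : V} (hv : 0 < h v) :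
    ∃ c ∈ T.children v, 0 < h c := by
  by_contra! hneg
  have : h v ≤ 0 := hcoh.2 v ▸ finsum_mem_induction (· ≤ 0) le_rfl (fun _ _ => add_nonpos) hneg
  linarith

lemma le_of_mem_children (hcoh : Coherent T h) (hnn : ∀ u, 0 ≤ h u) {c v : V}
    (hc : c ∈ T.children v) : h c ≤ h v := by
  rw [hcoh.2 v, finsum_mem_eq_finite_toFinset_sum _ (T.children_finite v)]
  exact Finset.single_le_sum (fun u _ => hnn u) ((T.children_finite v).mem_toFinset.2 hc)

lemma exists_pos_chain (hcoh : Coherent T h) (e : ℕ) {v : V} (hv : 0 < h v) :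
    ∃ v₀ ∈ T.descAt e v, ∀ k ≤ e, 0 < h (T.parent^[k] v₀) := by
  induction e generalizing v with
  | zero => exact ⟨v, ⟨rfl, rfl⟩, fun k hk => by rwa [Nat.le_zero.1 hk]⟩
  | succ e ih =>
    obtain ⟨c, hc, hcpos⟩ := hcoh.exists_pos_of_mem_children hv
    obtain ⟨v₀, ⟨hpar, hdep⟩, hpos⟩ := ih hcpos
    have hv₀ : T.parent^[e + 1] v₀ = v := by rw [Function.iterate_succ_apply', hpar, hc.1]
    refine ⟨v₀, ⟨hv₀, by rw [hdep, depth_of_mem_children hc]; ring⟩, fun k hk => ?_⟩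
    rcases Nat.lt_or_eq_of_le hk with hk | rfl
    · exact hpos k (by omega)
    · rwa [hv₀]

end Coherent

lemma AncOrEq.of_mem_children {c v w : V} (hcw : AncOrEq T c w) (hc : c ∈ T.children v) :
    AncOrEq T v w := by
  obtain ⟨k, hk, hd⟩ := hcw
  exact ⟨k + 1, by rw [Function.iterate_succ_apply', hk, hc.1],
    by rw [hd, depth_of_mem_children hc]; ring⟩

section ProperDesc

variable {ρ v c : V}

lemma ProperDesc.depth_lt (hv : ProperDesc T ρ v) : T.depth ρ < T.depth v := by
  obtain ⟨j, hj, -, hd⟩ := hv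
  omega

lemma not_properDesc_self : ¬ ProperDesc T ρ ρ := fun hρ => hρ.depth_lt.false

lemma not_properDesc_root : ¬ ProperDesc T ρ T.root := fun hroot => by
  have := hroot.depth_lt
  rw [T.depth_root] at this
  omega

lemma ProperDesc.of_mem_children (hv : ProperDesc T ρ v) (hc : c ∈ T.children v) :
    ProperDesc T ρ c := by
  obtain ⟨j, hj, hpar, hd⟩ := hv
  exact ⟨j + 1, j.succ_pos, by rw [iterate_parent_succ_of_mem_children hc, hpar],
    by rw [depth_of_mem_children hc, hd]; ring⟩

lemma properDesc_of_mem_children_self (hc : c ∈ T.children ρ) : ProperDesc T ρ c :=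
  ⟨1, one_pos, hc.1, depth_of_mem_children hc⟩

lemma not_properDesc_of_mem_children (hvρ : v ≠ ρ) (hv : ¬ ProperDesc T ρ v)
    (hc : c ∈ T.children v) : ¬ ProperDesc T ρ c := by
  rintro ⟨_ | _ | j, hj, hpar, hd⟩
  · omega
  · exact hvρ (by rwa [iterate_parent_succ_of_mem_children hc] at hpar)
  · refine hv ⟨j + 1, j.succ_pos, ?_, ?_⟩
    · rwa [iterate_parent_succ_of_mem_children hc] at hpar
    · rw [depth_of_mem_children hc] at hd
      omega

end ProperDesc

section Supported

variable {D : ℕ} {w : V}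

lemma supported_iff_of_depth_le {u : V} (hu : T.depth u ≤ D) :
    Supported T h D w u ↔ ∃ v : V, T.depth v = D ∧ v ≠ w ∧ T.parent^[D - T.depth u] v = u ∧
      ∀ k : ℕ, k ≤ D - T.depth u → 0 < h (T.parent^[k] v) := by
  rw [Supported, if_pos hu]

lemma supported_iff_of_le_depth {u : V} (hu : D ≤ T.depth u) :
    Supported T h D w u ↔
      T.parent^[T.depth u - D] u ≠ w ∧ 0 < h (T.parent^[T.depth u - D] u) := by
  rcases hu.lt_or_eq with hu | hu
  · rw [Supported, if_neg (by omega)]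
  · rw [supported_iff_of_depth_le hu.ge, ← hu, Nat.sub_self]
    constructor
    · rintro ⟨v, -, hvw, rfl, hpos⟩
      exact ⟨hvw, hpos 0 le_rfl⟩
    · rintro ⟨huw, hpos⟩
      exact ⟨u, hu.symm, huw, rfl, fun k hk => by rwa [Nat.le_zero.1 hk]⟩

/-- At depth `≥ D` supportedness only depends on the ancestor at depth `D`. -/
lemma supported_iff_of_mem_children_of_le_depth {c v : V} (hc : c ∈ T.children v)
    (hvD : D ≤ T.depth v) : Supported T h D w c ↔ Supported T h D w v := by
  have hcD := depth_of_mem_children hc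
  have hanc : T.parent^[T.depth c - D] c = T.parent^[T.depth v - D] v := by
    rw [show T.depth c - D = T.depth v - D + 1 by omega, iterate_parent_succ_of_mem_children hc]
  rw [supported_iff_of_le_depth hvD, supported_iff_of_le_depth (by omega), hanc]

lemma Supported.of_mem_children (hcoh : Coherent T h) (hnn : ∀ u, 0 ≤ h u) {c v : V}
    (hc : c ∈ T.children v) (hs : Supported T h D w c) : Supported T h D w v := by
  rcases le_or_gt D (T.depth v) with hvD | hvD
  · exact (supported_iff_of_mem_children_of_le_depth hc hvD).1 hs
  have hcD := depth_of_mem_children hc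
  obtain ⟨v₀, hv₀D, hv₀w, hpar, hpos⟩ := (supported_iff_of_depth_le (by omega)).1 hs
  have hv₀ : T.parent^[D - T.depth c + 1] v₀ = v := by
    rw [Function.iterate_succ_apply', hpar, hc.1]
  have hvpos : 0 < h v :=
    (hpar ▸ hpos _ le_rfl).trans_le (hcoh.le_of_mem_children hnn hc)
  refine (supported_iff_of_depth_le hvD.le).2
    ⟨v₀, hv₀D, hv₀w, by rwa [show D - T.depth v = D - T.depth c + 1 by omega], fun k hk => ?_⟩
  rcases Nat.lt_or_eq_of_le hk with hk | rfl
  · exact hpos k (by omega)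
  · rwa [show D - T.depth v = D - T.depth c + 1 by omega, hv₀]

lemma Supported.exists_mem_children {v : V} (hs : Supported T h D w v) (hvD : T.depth v < D) :
    ∃ c ∈ T.children v, Supported T h D w c := by
  obtain ⟨v₁, hv₁D, hv₁w, hpar, hpos⟩ := (supported_iff_of_depth_le hvD.le).1 hs
  set c := T.parent^[D - T.depth v - 1] v₁
  have hdc : T.depth c = T.depth v + 1 := by
    rw [depth_iterate_parent, hv₁D]
    omega
  have hc : c ∈ T.children v := by
    refine mem_children_of_parent_eq ?_ hdc
    rwa [show D - T.depth v = D - T.depth v - 1 + 1 by omega, Function.iterate_succ_apply'] at hpar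
  refine ⟨c, hc, (supported_iff_of_depth_le (by omega)).2 ⟨v₁, hv₁D, hv₁w, ?_, fun k hk => ?_⟩⟩
  · rw [show D - T.depth c = D - T.depth v - 1 by omega]
  · exact hpos k (by omega)

lemma ancOrEq_of_not_supported (hcoh : Coherent T h) {c : V}
    (hcD : T.depth c ≤ D) (hpos : 0 < h c) (hns : ¬ Supported T h D w c) : AncOrEq T c w := by
  obtain ⟨v₀, ⟨hpar, hdep⟩, hchain⟩ := hcoh.exists_pos_chain (D - T.depth c) hpos
  obtain rfl : v₀ = w := by
    by_contra hne
    exact hns ((supported_iff_of_depth_le hcD).2 ⟨v₀, by omega, hne, hpar, hchain⟩)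
  exact ⟨D - T.depth c, hpar, hdep⟩

lemma supported_or_eq_zero_of_mem_children (hcoh : Coherent T h) (hnn : ∀ u, 0 ≤ h u)
    {ρ v c : V}
    (hmax : ∀ u : V, AncOrEq T u w → T.depth ρ < T.depth u →
      ∀ c ∈ T.children u, ¬ Supported T h D w c)
    (hv : ProperDesc T ρ v) (hvs : Supported T h D w v) (hc : c ∈ T.children v) :
    Supported T h D w c ∨ h c = 0 := by
  rcases le_or_gt D (T.depth v) with hvD | hvD
  · exact Or.inl ((supported_iff_of_mem_children_of_le_depth hc hvD).2 hvs)
  refine or_iff_not_imp_right.2 fun hc0 => by_contra fun hcs => ?_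
  have hcw : AncOrEq T c w := ancOrEq_of_not_supported hcoh
    (by rw [depth_of_mem_children hc]; omega) ((hnn c).lt_of_ne' hc0) hcs
  obtain ⟨c', hc', hc's⟩ := hvs.exists_mem_children hvD
  exact hmax v (hcw.of_mem_children hc) hv.depth_lt c' hc' hc's

end Supported

section Renorm

variable {D : ℕ} {w ρ u : V}

lemma renorm_of_not_properDesc (hu : ¬ ProperDesc T ρ u) : renorm T h D w ρ u = h u := by
  simp only [renorm, if_neg hu]

lemma renorm_of_supported (hu : ProperDesc T ρ u) (hs : Supported T h D w u) :
    renorm T h D w ρ u = Ztot T h ρ / Zplus T h D w ρ * h u := by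
  simp only [renorm, if_pos hu, if_pos hs]

lemma renorm_of_not_supported (hu : ProperDesc T ρ u) (hs : ¬ Supported T h D w u) :
    renorm T h D w ρ u = 0 := by
  simp only [renorm, if_pos hu, if_neg hs]

lemma finsum_mem_children_renorm_self (hcoh : Coherent T h) (hZp : 0 < Zplus T h D w ρ) :
    ∑ᶠ c ∈ T.children ρ, renorm T h D w ρ c = h ρ := by
  set s := Ztot T h ρ / Zplus T h D w ρ
  calc ∑ᶠ c ∈ T.children ρ, renorm T h D w ρ c
      = ∑ᶠ c ∈ T.children ρ, {u | Supported T h D w u}.indicator (fun u => s * h u) c := by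
        refine finsum_mem_congr rfl fun c hc => ?_
        by_cases hs : Supported T h D w c
        · rw [renorm_of_supported (properDesc_of_mem_children_self hc) hs,
            Set.indicator_of_mem (s := {u | Supported T h D w u}) hs]
        · rw [renorm_of_not_supported (properDesc_of_mem_children_self hc) hs,
            Set.indicator_of_notMem (s := {u | Supported T h D w u}) hs]
    _ = ∑ᶠ c ∈ T.children ρ ∩ {u | Supported T h D w u}, s * h c := by
        rw [finsum_mem_def, finsum_mem_def, Set.indicator_indicator]
    _ = s * Zplus T h D w ρ := by rw [Zplus, mul_finsum_mem]
    _ = h ρ := by rw [div_mul_cancel₀ _ hZp.ne', Ztot, ← hcoh.2 ρ]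

lemma exists_renorm_eq_mul_of_ne (hcoh : Coherent T h) (hnn : ∀ u, 0 ≤ h u)
    (hmax : ∀ u : V, AncOrEq T u w → T.depth ρ < T.depth u →
      ∀ c ∈ T.children u, ¬ Supported T h D w c)
    {v : V} (hvρ : v ≠ ρ) :
    ∃ a : ℝ, renorm T h D w ρ v = a * h v ∧
      ∀ c ∈ T.children v, renorm T h D w ρ c = a * h c := by
  by_cases hv : ProperDesc T ρ v
  · by_cases hvs : Supported T h D w v
    · refine ⟨_, renorm_of_supported hv hvs, fun c hc => ?_⟩
      rcases supported_or_eq_zero_of_mem_children hcoh hnn hmax hv hvs hc with hcs | hc0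
      · exact renorm_of_supported (hv.of_mem_children hc) hcs
      · simp [renorm, hc0]
    · refine ⟨0, by rw [renorm_of_not_supported hv hvs, zero_mul], fun c hc => ?_⟩
      rw [renorm_of_not_supported (hv.of_mem_children hc)
        fun hcs => hvs (hcs.of_mem_children hcoh hnn hc), zero_mul]
  · refine ⟨1, by rw [renorm_of_not_properDesc hv, one_mul], fun c hc => ?_⟩
    rw [renorm_of_not_properDesc (not_properDesc_of_mem_children hvρ hv hc), one_mul]

end Renorm

end

theorem stmt4_general {V : Type} (T : RTree V) (h : V → ℝ) (D : ℕ) (w ρ : V)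
    (hcoh : Coherent T h) (hnn : ∀ v : V, 0 ≤ h v)
    (hρ : IsRedistPoint T h D w ρ)
    (hZp : 0 < Zplus T h D w ρ) :
    Coherent T (renorm T h D w ρ) := by
  obtain ⟨-, -, hmax⟩ := hρ
  refine ⟨by rw [renorm_of_not_properDesc not_properDesc_root, hcoh.1], fun v => ?_⟩
  rcases eq_or_ne v ρ with rfl | hvρ
  · rw [renorm_of_not_properDesc not_properDesc_self, finsum_mem_children_renorm_self hcoh hZp]
  · obtain ⟨a, hv, hc⟩ := exists_renorm_eq_mul_of_ne hcoh hnn hmax hvρ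
    rw [hv, finsum_mem_congr rfl hc, ← mul_finsum_mem, ← hcoh.2 v]

/-- Renormalization preserves coherence: if `h` is coherent (and nonnegative),
`w` is the refuted depth-`D` vertex, `ρ` is the corresponding redistribution
point (the deepest ancestor of `w` with surviving, i.e. supported, children),
and the surviving weight `Z⁺` outside the refuted vertex is positive, then the
renormalized weight function is again coherent. -/
theorem stmt4 {V : Type} (T : RTree V) (h : V → ℝ) (D : ℕ) (w ρ : V)
    (hcoh : Coherent T h) (hnn : ∀ v : V, 0 ≤ h v)
    (hwD : T.depth w = D)
    (hρ : IsRedistPoint T h D w ρ)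
    (hZp : 0 < Zplus T h D w ρ) :
    Coherent T (renorm T h D w ρ) :=
  stmt4_general T h D w ρ hcoh hnn hρ hZp
end

section
/- The prover derived from a depth Hintikka tree is complete: if φ is logically valid then the sum of weights of the constituents in its dnf equals 1. -/
/-- Completeness of the prover derived from a depth Hintikka tree: a depth
Hintikka tree assigns weight 0 to every inconsistent constituent, the weights
of the depth-`d` constituents sum to 1, and a depth-`d` sentence is logically
valid iff its dnf contains every consistent depth-`d` constituent.  If `φ` is
logically valid, then the sum of the weights of the constituents in its dnf
equals 1. -/
theorem stmt18 {C S : Type} [Fintype C] (h : C → ℝ) (consistent : C → Prop)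
    (valid : S → Prop) (dnf : S → Finset C)
    (hsum : ∑ δ : C, h δ = 1)
    (hdepth : ∀ δ : C, ¬ consistent δ → h δ = 0)
    (hvalid : ∀ φ : S, valid φ ↔ ∀ δ : C, consistent δ → δ ∈ dnf φ)
    (φ : S) (hv : valid φ) :
    ∑ δ ∈ dnf φ, h δ = 1 := by
  have hsupport : ∀ δ, h δ ≠ 0 → δ ∈ dnf φ := fun δ hδ =>
    (hvalid φ).mp hv δ (not_not.mp (mt (hdepth δ) hδ))
  rw [Fintype.sum_subset hsupport, hsum]
end
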